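/- arXiv:1804.04646 — 6 statements merged into one kernel-verified Lean document; each statement's English description precedes it below -/
import Mathlib

section
/- Let k and m be positive integers with k odd. Then m(m−1)/2 divides S_k(m). -/
/-!
For odd `k`, `j ^ k + (n - j) ^ k` is divisible by `j + (n - j) = n`, so pairing `j` with `n - j`
shows `n ∣ 2 * S k (n + 1)`. Applied to `n = m - 1` and to `n = m` (where the extra term `m ^ k`
is itself divisible by `m`), this gives `m - 1 ∣ 2 * S k m` and `m ∣ 2 * S k m`; as `m` and
`m - 1` are coprime, `m * (m - 1) ∣ 2 * S k m`, and `m * (m - 1)` is even.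
-/

open Finset

/-- `S k m = 1^k + 2^k + ⋯ + (m-1)^k`, the sum of the k-th powers of the
first `m - 1` positive integers. -/
def S (k m : ℕ) : ℕ := ∑ j ∈ Finset.Ico 1 m, j ^ k

theorem Odd.dvd_two_mul_sum_range_succ_pow {k : ℕ} (hk : Odd k) (n : ℕ) :
    n ∣ 2 * ∑ j ∈ range (n + 1), j ^ k := by
  have hpair : 2 * ∑ j ∈ range (n + 1), j ^ k = ∑ j ∈ range (n + 1), (j ^ k + (n - j) ^ k) := by
    rw [sum_add_distrib, ← sum_range_reflect _ (n + 1), Nat.add_sub_cancel, two_mul]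
  rw [hpair]
  refine dvd_sum fun j hj => ?_
  simpa [Nat.add_sub_cancel' (mem_range_succ_iff.mp hj)] using hk.nat_add_dvd_pow_add_pow j (n - j)

theorem S_succ_eq_sum_range {k : ℕ} (hk : k ≠ 0) (n : ℕ) :
    S k (n + 1) = ∑ j ∈ range (n + 1), j ^ k := by
  rw [S, sum_range_succ', sum_Ico_eq_sum_range, Nat.add_sub_cancel, zero_pow hk, add_zero]
  simp only [add_comm 1]

theorem S_succ {k n : ℕ} (hn : 1 ≤ n) : S k (n + 1) = S k n + n ^ k :=
  sum_Ico_succ_top hn _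

theorem Odd.dvd_two_mul_S_succ {k : ℕ} (hk : Odd k) (n : ℕ) : n ∣ 2 * S k (n + 1) := by
  simpa only [S_succ_eq_sum_range hk.pos.ne'] using hk.dvd_two_mul_sum_range_succ_pow n

theorem Odd.succ_dvd_two_mul_S_succ {k : ℕ} (hk : Odd k) (n : ℕ) :
    n + 1 ∣ 2 * S k (n + 1) := by
  have h := hk.dvd_two_mul_S_succ (n + 1)
  rw [S_succ (Nat.le_add_left 1 n), mul_add] at h
  exact (Nat.dvd_add_left (dvd_mul_of_dvd_right (dvd_pow_self _ hk.pos.ne') 2)).mp h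

theorem stmt_3_general (k m : ℕ) (hodd : Odd k) :
    m * (m - 1) / 2 ∣ S k m := by
  rw [Nat.div_dvd_iff_dvd_mul (Nat.even_mul_pred_self m).two_dvd two_pos]
  cases m with
  | zero => simp [S]
  | succ n =>
    rw [Nat.add_sub_cancel]
    exact (Nat.coprime_self_add_left.mpr (Nat.coprime_one_left n)).mul_dvd_of_dvd_of_dvd
      (hodd.succ_dvd_two_mul_S_succ n) (hodd.dvd_two_mul_S_succ n)

theorem stmt_3 (k m : ℕ) (hk : 0 < k) (hm : 0 < m) (hodd : Odd k) :
    m * (m - 1) / 2 ∣ S k m :=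
  stmt_3_general k m hodd
end

section
/- Let k and m be positive integers with k even. Then S_k(m) ≡ −Σ_{p prime, p | m, (p−1) | k} (m/p) (mod m). -/
/-!
It suffices to work modulo each prime power `p ^ e` exactly dividing `m = n * p ^ e`.
Since `j ↦ j ^ k` is `p ^ e`-periodic modulo `p ^ e`, `S_k(m) ≡ n S_k(p ^ e)`.
Expanding `(a + q b) ^ k ≡ a ^ k + k q b a ^ (k - 1)` modulo `q ^ 2` gives
`S_k(r q) ≡ r S_k(q) (mod r q)` whenever `r ∣ q` and `k` is even, because the linear terms
add up to a multiple of `q k ∑_{b < r} b = q r (r - 1) k / 2`. Iterating,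
`S_k(p ^ e) ≡ p ^ (e - 1) S_k(p) (mod p ^ e)`, and `S_k(p) ≡ -[p - 1 ∣ k] (mod p)` by the
power sums over `𝔽_p`. So `S_k(m) ≡ -(m / p) [p - 1 ∣ k] (mod p ^ e)`, which is
the right-hand side modulo `p ^ e`, since `p ^ e ∣ m / q` for every prime `q ≠ p`.
-/

open Finset

theorem sum_range_mul_eq_sum_sum {M : Type*} [AddCommMonoid M] (f : ℕ → M) (q n : ℕ) :
    ∑ j ∈ range (q * n), f j = ∑ b ∈ range q, ∑ a ∈ range n, f (n * b + a) := by
  induction q with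
  | zero => simp
  | succ q ih => rw [sum_range_succ, ← ih, Nat.succ_mul, sum_range_add, mul_comm n q]

theorem ZMod.sum_univ_eq_sum_range {M : Type*} [AddCommMonoid M] (p : ℕ) [NeZero p]
    (f : ZMod p → M) : ∑ x : ZMod p, f x = ∑ j ∈ range p, f j := by
  rw [← Fin.sum_univ_eq_sum_range (fun j => f j)]
  refine Fintype.sum_equiv (ZMod.finEquiv p).symm.toEquiv _ _ fun x => congrArg f ?_
  obtain ⟨n, rfl⟩ : ∃ n, p = n + 1 := Nat.exists_eq_succ_of_ne_zero (NeZero.ne p)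
  exact (ZMod.natCast_zmod_val x).symm

theorem FiniteField.sum_pow_of_ne_zero {K : Type*} [Field K] [Fintype K] [DecidableEq K]
    {k : ℕ} (hk : k ≠ 0) :
    ∑ x : K, x ^ k = if Fintype.card K - 1 ∣ k then -1 else 0 := by
  rw [← sum_pow_units]
  calc ∑ x : K, x ^ k = ∑ x with x ≠ 0, x ^ k :=
        (sum_filter_of_ne fun x _ h => by rintro rfl; simp [hk] at h).symm
    _ = ∑ x : {x : K // x ≠ 0}, (x : K) ^ k := sum_subtype _ (by simp) _
    _ = ∑ u : Kˣ, (u : K) ^ k := Fintype.sum_equiv unitsEquivNeZero.symm _ _ fun _ => rfl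

theorem Int.modEq_of_forall_primeFactors {m : ℕ} (hm : m ≠ 0) {a b : ℤ}
    (h : ∀ p ∈ m.primeFactors, a ≡ b [ZMOD p ^ m.factorization p]) : a ≡ b [ZMOD m] := by
  rw [Int.modEq_iff_dvd, ← Nat.prod_factorization_pow_eq_self hm,
    Nat.prod_factorization_eq_prod_primeFactors, Nat.cast_prod]
  refine prod_dvd_of_coprime (fun p hp q hq hpq => ?_) fun p hp => by exact_mod_cast (h p hp).dvd
  have hcop := (Nat.coprime_primes (Nat.prime_of_mem_primeFactors hp)
    (Nat.prime_of_mem_primeFactors hq)).mpr hpq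
  exact Nat.isCoprime_iff_coprime.mpr (hcop.pow _ _)

theorem Nat.ordProj_dvd_div_of_ne {m p q : ℕ} (hp : p.Prime) (hq : q.Prime) (hqp : q ≠ p)
    (hqm : q ∣ m) : p ^ m.factorization p ∣ m / q := by
  have hcop := Nat.Coprime.pow_left (m.factorization p) ((Nat.coprime_primes hp hq).mpr hqp.symm)
  refine hcop.dvd_of_dvd_mul_right ?_
  rw [Nat.div_mul_cancel hqm]
  exact Nat.ordProj_dvd m p

theorem cast_S_eq_sum_range {k : ℕ} (hk : k ≠ 0) (m : ℕ) :
    (S k m : ℤ) = ∑ j ∈ range m, (j : ℤ) ^ k := by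
  rw [S, Nat.cast_sum]
  refine sum_subset (fun j hj => by simp only [mem_Ico, mem_range] at hj ⊢; omega)
    fun j hjm hj => ?_
  obtain rfl : j = 0 := by simp only [mem_range, mem_Ico] at hjm hj; omega
  simp [hk]

theorem sum_range_mul_pow_modEq (k q n : ℕ) :
    ∑ j ∈ range (q * n), (j : ℤ) ^ k ≡ q * ∑ j ∈ range n, (j : ℤ) ^ k [ZMOD n] := by
  have hq : (q : ℤ) * ∑ j ∈ range n, (j : ℤ) ^ k =
      ∑ _b ∈ range q, ∑ a ∈ range n, (a : ℤ) ^ k := by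
    simp
  rw [sum_range_mul_eq_sum_sum, hq]
  refine Int.ModEq.sum fun b _ => Int.ModEq.sum fun a _ => Int.ModEq.pow k ?_
  simp [Int.ModEq]

theorem dvd_mul_sum_range_of_even {k : ℕ} (hk : Even k) (q : ℕ) :
    (q : ℤ) ∣ k * ∑ b ∈ range q, (b : ℤ) := by
  obtain ⟨r, rfl⟩ := hk
  have h : (r + r) * ∑ b ∈ range q, b = q * (r * (q - 1)) := by
    rw [← two_mul, mul_assoc, mul_comm, mul_assoc, sum_range_id_mul_two]; ring
  have := Int.natCast_dvd_natCast.mpr (Dvd.intro _ h.symm)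
  push_cast at this
  exact this

theorem sum_range_mul_pow_modEq_mul {k q n : ℕ} (hk : Even k) (hqn : q ∣ n) :
    ∑ j ∈ range (q * n), (j : ℤ) ^ k ≡ q * ∑ j ∈ range n, (j : ℤ) ^ k
      [ZMOD q * n] := by
  have hsq : (q * n : ℤ) ∣ n ^ 2 := by
    rw [sq]; exact mul_dvd_mul_right (Int.natCast_dvd_natCast.mpr hqn) _
  have hterm (b a : ℕ) :
      ((n * b + a : ℕ) : ℤ) ^ k ≡ a ^ k + n * k * b * a ^ (k - 1) [ZMOD q * n] := by
    refine Int.ModEq.of_dvd (hsq.trans (pow_dvd_pow_of_dvd (dvd_mul_right _ (b : ℤ)) 2)) ?_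
    rw [Int.modEq_comm, Int.modEq_iff_dvd]
    have h := sq_dvd_add_pow_sub_sub ((n : ℤ) * b) a k
    push_cast
    rwa [show ((n : ℤ) * b + a) ^ k - (a ^ k + n * k * b * a ^ (k - 1))
      = (a + n * b) ^ k - a ^ (k - 1) * (n * b) * k - a ^ k by ring]
  have hlinear : (q * n : ℤ) ∣
      n * (k * ∑ b ∈ range q, (b : ℤ)) * ∑ a ∈ range n, (a : ℤ) ^ (k - 1) := by
    rw [mul_comm (q : ℤ)]
    exact (mul_dvd_mul_left _ (dvd_mul_sum_range_of_even hk q)).mul_right _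
  calc ∑ j ∈ range (q * n), (j : ℤ) ^ k
      = ∑ b ∈ range q, ∑ a ∈ range n, ((n * b + a : ℕ) : ℤ) ^ k :=
        sum_range_mul_eq_sum_sum _ _ _
    _ ≡ ∑ b ∈ range q, ∑ a ∈ range n, ((a : ℤ) ^ k + n * k * b * a ^ (k - 1))
          [ZMOD q * n] :=
        Int.ModEq.sum fun b _ => Int.ModEq.sum fun a _ => hterm b a
    _ = q * ∑ a ∈ range n, (a : ℤ) ^ k
          + n * (k * ∑ b ∈ range q, (b : ℤ)) * ∑ a ∈ range n, (a : ℤ) ^ (k - 1) := by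
        simp only [sum_add_distrib, ← mul_sum, sum_const, card_range, nsmul_eq_mul, ← sum_mul]
        ring
    _ ≡ q * ∑ a ∈ range n, (a : ℤ) ^ k + 0 [ZMOD q * n] :=
        Int.ModEq.add_left _ (Int.modEq_zero_iff_dvd.mpr hlinear)
    _ = q * ∑ a ∈ range n, (a : ℤ) ^ k := add_zero _

theorem sum_range_pow_pow_modEq {k : ℕ} (hk : Even k) (q e : ℕ) :
    ∑ j ∈ range (q ^ (e + 1)), (j : ℤ) ^ k ≡ q ^ e * ∑ j ∈ range q, (j : ℤ) ^ k
      [ZMOD q ^ (e + 1)] := by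
  induction e with
  | zero => simp [Int.ModEq.refl]
  | succ e ih =>
    have h := sum_range_mul_pow_modEq_mul hk (dvd_pow_self q e.succ_ne_zero)
    push_cast [← pow_succ'] at h
    refine h.trans ?_
    have := ih.mul_left' (c := (q : ℤ))
    rwa [← mul_assoc, ← pow_succ', ← pow_succ'] at this

theorem sum_range_pow_modEq_of_prime {p k : ℕ} (hp : p.Prime) (hk : k ≠ 0) :
    ∑ j ∈ range p, (j : ℤ) ^ k ≡ if p - 1 ∣ k then -1 else 0 [ZMOD p] := by
  have := Fact.mk hp
  rw [← ZMod.intCast_eq_intCast_iff]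
  push_cast
  rw [← ZMod.sum_univ_eq_sum_range p (· ^ k), FiniteField.sum_pow_of_ne_zero hk, ZMod.card]

theorem sum_range_pow_modEq_ordProj {k m p : ℕ} (hk : Even k) (hp : p.Prime) (hpm : p ∣ m)
    (hm : m ≠ 0) :
    ∑ j ∈ range m, (j : ℤ) ^ k ≡ (m / p : ℕ) * ∑ j ∈ range p, (j : ℤ) ^ k
      [ZMOD p ^ m.factorization p] := by
  obtain ⟨e, he⟩ := Nat.exists_eq_add_one_of_ne_zero (hp.factorization_pos_of_dvd hm hpm).ne'
  obtain ⟨n, hmn⟩ : ∃ n, m = n * p ^ (e + 1) := ⟨_, by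
    rw [← he, mul_comm]; exact (Nat.ordProj_mul_ordCompl_eq_self m p).symm⟩
  have hmp : m / p = n * p ^ e := by
    rw [hmn, pow_succ, ← mul_assoc, Nat.mul_div_cancel _ hp.pos]
  rw [he, hmp]
  calc ∑ j ∈ range m, (j : ℤ) ^ k
      ≡ n * ∑ j ∈ range (p ^ (e + 1)), (j : ℤ) ^ k [ZMOD p ^ (e + 1)] := by
        have h := sum_range_mul_pow_modEq k n (p ^ (e + 1))
        rw [← hmn] at h
        exact_mod_cast h
    _ ≡ n * (p ^ e * ∑ j ∈ range p, (j : ℤ) ^ k) [ZMOD p ^ (e + 1)] :=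
        (sum_range_pow_pow_modEq hk p e).mul_left _
    _ = (n * p ^ e : ℕ) * ∑ j ∈ range p, (j : ℤ) ^ k := by push_cast; ring

theorem stmt_4 (k m : ℕ) (hk : 0 < k) (hm : 0 < m) (heven : Even k) :
    (S k m : ℤ) ≡
      -∑ p ∈ m.primeFactors.filter (fun p => (p - 1) ∣ k), ((m / p : ℕ) : ℤ)
      [ZMOD (m : ℤ)] := by
  rw [cast_S_eq_sum_range hk.ne']
  refine Int.modEq_of_forall_primeFactors hm.ne' fun p hp => ?_
  set F := m.primeFactors.filter fun q => (q - 1) ∣ k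
  have hpp := Nat.prime_of_mem_primeFactors hp
  have hpm := Nat.dvd_of_mem_primeFactors hp
  have hdvd : (p : ℤ) ^ m.factorization p ∣ (m / p : ℕ) * p := by
    rw [← Nat.cast_pow, ← Nat.cast_mul, Nat.div_mul_cancel hpm]
    exact Int.natCast_dvd_natCast.mpr (Nat.ordProj_dvd m p)
  have hother :
      ∀ q ∈ F, q ≠ p → ((m / q : ℕ) : ℤ) ≡ 0 [ZMOD p ^ m.factorization p] := by
    intro q hqF hqp
    have hq := (mem_filter.mp hqF).1
    have hdvd_q := Nat.ordProj_dvd_div_of_ne hpp (Nat.prime_of_mem_primeFactors hq) hqp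
      (Nat.dvd_of_mem_primeFactors hq)
    exact Int.modEq_zero_iff_dvd.mpr (by exact_mod_cast hdvd_q)
  calc ∑ j ∈ range m, (j : ℤ) ^ k
      ≡ (m / p : ℕ) * ∑ j ∈ range p, (j : ℤ) ^ k [ZMOD p ^ m.factorization p] :=
        sum_range_pow_modEq_ordProj heven hpp hpm hm.ne'
    _ ≡ (m / p : ℕ) * if p - 1 ∣ k then -1 else 0 [ZMOD p ^ m.factorization p] :=
        (sum_range_pow_modEq_of_prime hpp hk.ne').mul_left'.of_dvd hdvd
    _ = -if p ∈ F then ((m / p : ℕ) : ℤ) else 0 := by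
        simp only [F, mem_filter, hp, true_and]
        split_ifs <;> simp
    _ ≡ -∑ q ∈ F, ((m / q : ℕ) : ℤ) [ZMOD p ^ m.factorization p] :=
        (Int.sum_modEq_ite hother).symm.neg
end

section
/- Let k and m be positive integers with k even. Then T_k(m) = 2^k · Σ_{j=0}^{k} C(k,j) B_{k−j} · (2m+1)^{j+1} / (2^{j+1} (j+1)), as an identity of rational numbers. -/
/-!
Summing `B_{k+1}(x + 1) - B_{k+1}(x) = (k + 1) x^k` over `x = 1/2, 3/2, …, m - 1/2` gives
`(k + 1) T_k(m) = 2^k (B_{k+1}(m + 1/2) - B_{k+1}(1/2))`. For even `k` both `B_{k+1}(1/2)` and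
`B_{k+1} = B_{k+1}(0)` vanish (the first by the reflection `B_n(1 - x) = (-1)^n B_n(x)`), so this
equals `2^k (B_{k+1}(m + 1/2) - B_{k+1}(0))`, and expanding the Bernoulli polynomial in powers of
`m + 1/2 = (2m + 1)/2` gives the claimed sum.
-/

/-- `T k m = 1^k + 3^k + ⋯ + (2m-1)^k`, the sum of the k-th powers of the
first `m` odd positive integers. -/
def T (k m : ℕ) : ℕ := ∑ j ∈ Finset.range m, (2 * j + 1) ^ k

open Finset

namespace Polynomial

theorem bernoulli_eval_half_of_odd {n : ℕ} (hn : Odd n) :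
    (bernoulli n).eval (1 / 2 : ℚ) = 0 := by
  have h := bernoulli_eval_one_sub n (1 / 2)
  norm_num [hn.neg_one_pow] at h
  linarith

theorem bernoulli_succ_eval_add_nat (n : ℕ) (x : ℚ) (m : ℕ) :
    (bernoulli (n + 1)).eval (x + m) =
      (bernoulli (n + 1)).eval x + (n + 1) * ∑ j ∈ range m, (x + j) ^ n := by
  induction m with
  | zero => simp
  | succ m ih =>
    rw [Nat.cast_succ, show x + (m + 1) = 1 + (x + m) by ring, bernoulli_eval_one_add, ih,
      sum_range_succ]
    push_cast
    ring

theorem bernoulli_succ_eval_sub_bernoulli (n : ℕ) (y : ℚ) :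
    (bernoulli (n + 1)).eval y - _root_.bernoulli (n + 1) =
      (n + 1) * ∑ j ∈ range (n + 1),
        n.choose j * _root_.bernoulli (n - j) * y ^ (j + 1) / (j + 1) := by
  rw [bernoulli_def, eval_finsetSum, sum_range_succ', mul_sum]
  simp only [eval_monomial, Nat.choose_zero_right, Nat.cast_one, mul_one, pow_zero,
    Nat.sub_zero, add_sub_cancel_right]
  refine sum_congr rfl fun j _ => ?_
  have hchoose : ((n + 1).choose (j + 1) : ℚ) * (j + 1) = (n + 1) * n.choose j := by
    exact_mod_cast (Nat.add_one_mul_choose_eq n j).symm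
  rw [Nat.add_sub_add_right]
  field_simp
  linear_combination _root_.bernoulli (n - j) * y ^ (j + 1) * hchoose

end Polynomial

theorem T_eq_two_pow_mul_sum (k m : ℕ) :
    (T k m : ℚ) = 2 ^ k * ∑ j ∈ range m, (1 / 2 + j : ℚ) ^ k := by
  rw [T, mul_sum]
  push_cast
  refine sum_congr rfl fun j _ => ?_
  rw [← mul_pow]
  ring

theorem stmt_9_general (k m : ℕ) (hk : 0 < k) (heven : Even k) :
    (T k m : ℚ) =
      2 ^ k * ∑ j ∈ Finset.range (k + 1),
        (k.choose j : ℚ) * bernoulli (k - j) * (2 * m + 1) ^ (j + 1) /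
          (2 ^ (j + 1) * (j + 1)) := by
  have hterm (j : ℕ) : (k.choose j : ℚ) * bernoulli (k - j) * (2 * m + 1) ^ (j + 1) /
      (2 ^ (j + 1) * (j + 1)) =
      k.choose j * bernoulli (k - j) * (1 / 2 + m) ^ (j + 1) / (j + 1) := by
    rw [show (1 / 2 + m : ℚ) = (2 * m + 1) / 2 by ring, div_pow]
    field_simp
  have hbernoulli := Polynomial.bernoulli_succ_eval_sub_bernoulli k (1 / 2 + m)
  rw [Polynomial.bernoulli_succ_eval_add_nat,
    Polynomial.bernoulli_eval_half_of_odd heven.add_one,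
    bernoulli_eq_zero_of_odd heven.add_one (by omega), zero_add, sub_zero] at hbernoulli
  have hk1 : (k + 1 : ℚ) ≠ 0 := by positivity
  simp_rw [hterm, T_eq_two_pow_mul_sum]
  exact congrArg (2 ^ k * ·) (mul_left_cancel₀ hk1 hbernoulli)

theorem stmt_9 (k m : ℕ) (hk : 0 < k) (hm : 0 < m) (heven : Even k) :
    (T k m : ℚ) =
      2 ^ k * ∑ j ∈ Finset.range (k + 1),
        (k.choose j : ℚ) * bernoulli (k - j) * (2 * m + 1) ^ (j + 1) /
          (2 ^ (j + 1) * (j + 1)) :=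
  stmt_9_general k m hk heven
end

section
/- Let k and m be positive integers with k even. Then (2m+1)^2 divides T_k(m) if and only if (2m+1) divides U_k. -/
/-!
Write `n = 2m + 1`. Telescoping `B_{k+1}(x + 1) - B_{k+1}(x) = (k + 1) x^k` over
`x = 1/2, 3/2, …, (n - 2)/2` and using `B_{k+1}(1/2) = 0` gives
`(k + 1) T_k(m) = 2^k B_{k+1}(n/2)`. Expanding the Bernoulli polynomial yields
`T_k(m) = 2^(k-1) n B_k + n^2 R`, and von Staudt–Clausen (`p B_i` is `p`-integral, and `3` divides
the denominator `D` of `B_k`) shows that `D R` is `p`-integral for every prime `p ∣ n`. Hence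
`n^2 ∣ D T_k(m) - 2^(k-1) n U_k` in `ℤ`; as `n` is odd, and coprime to `D` as soon as it divides
`U_k`, the equivalence follows.
-/

open Finset

-- The rationals whose denominator is prime to `p`.
local notation "ℤ₍" p "₎" => Valuation.integer (Rat.padicValuation p)

theorem Nat.one_add_mul_factorization_le {p t : ℕ} (hp : 1 ≤ p) (ht : t ≠ 0) :
    1 + (p - 1) * t.factorization p ≤ t := by
  have h := one_add_le_pow_of_two_add_nonneg (a := p - 1) (zero_le _) (t.factorization p)
  rw [Nat.add_sub_cancel' hp, mul_comm] at h
  exact h.trans (Nat.ordProj_le p ht)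

theorem Nat.factorization_le_sub_two {p t : ℕ} (hp : 3 ≤ p) (ht : 2 ≤ t) :
    t.factorization p ≤ t - 2 := by
  have h := Nat.one_add_mul_factorization_le (t := t) (by omega : 1 ≤ p) (by omega)
  have : 2 * t.factorization p ≤ (p - 1) * t.factorization p := Nat.mul_le_mul_right _ (by omega)
  omega

theorem Nat.factorization_add_one_le_sub_two {p t : ℕ} (hp : 5 ≤ p) (ht : 3 ≤ t) :
    t.factorization p + 1 ≤ t - 2 := by
  have h := Nat.one_add_mul_factorization_le (t := t) (by omega : 1 ≤ p) (by omega)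
  have : 4 * t.factorization p ≤ (p - 1) * t.factorization p := Nat.mul_le_mul_right _ (by omega)
  omega

theorem Polynomial.bernoulli_eval_eq_sum (n : ℕ) (x : ℚ) :
    (bernoulli n).eval x =
      ∑ i ∈ range (n + 1), _root_.bernoulli i * n.choose i * x ^ (n - i) := by
  simp [bernoulli, eval_finsetSum]

theorem Polynomial.bernoulli_eval_half_of_odd_s10 {n : ℕ} (hn : Odd n) :
    (bernoulli n).eval (1 / 2) = 0 := by
  have h := bernoulli_eval_one_sub n (1 / 2)
  rw [hn.neg_one_pow] at h
  norm_num at h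
  linarith

theorem T_eq_bernoulli_eval_sub (k m : ℕ) :
    (k + 1) * (T k m : ℚ) =
      2 ^ k * ((Polynomial.bernoulli (k + 1)).eval ((2 * m + 1 : ℚ) / 2) -
        (Polynomial.bernoulli (k + 1)).eval (1 / 2)) := by
  induction m with
  | zero => simp [T]
  | succ m ih =>
    have hstep := Polynomial.bernoulli_eval_one_add (k + 1) ((2 * m + 1) / 2)
    rw [T, sum_range_succ, ← T]
    push_cast at hstep ⊢
    have hpow : (2 : ℚ) ^ k * ((2 * m + 1) / 2) ^ k = (2 * m + 1) ^ k := by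
      rw [← mul_pow, mul_div_cancel₀ _ two_ne_zero]
    rw [show (2 * (m + 1) + 1) / 2 = 1 + (2 * m + 1) / (2 : ℚ) by ring, hstep]
    linear_combination ih - (k + 1) * hpow

theorem T_eq_bernoulli_eval {k : ℕ} (hk : Even k) (m : ℕ) :
    (k + 1) * (T k m : ℚ) = 2 ^ k * (Polynomial.bernoulli (k + 1)).eval ((2 * m + 1 : ℚ) / 2) := by
  rw [T_eq_bernoulli_eval_sub, Polynomial.bernoulli_eval_half_of_odd_s10 hk.add_one, sub_zero]

def oddPowerSumRemainder (k n : ℕ) : ℚ :=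
  ∑ i ∈ range k, bernoulli i * k.choose i * 2 ^ i * n ^ (k - 1 - i) / (2 * (k + 1 - i : ℕ))

theorem two_pow_mul_choose_mul_half_pow {k i : ℕ} (hi : i < k) (n : ℚ) :
    2 ^ k * (bernoulli i * (k + 1).choose i * (n / 2) ^ (k + 1 - i)) =
      (k + 1) * (n ^ 2 * (bernoulli i * k.choose i * 2 ^ i * n ^ (k - 1 - i) /
        (2 * (k + 1 - i : ℕ)))) := by
  obtain ⟨d, rfl⟩ : ∃ d, k = i + d + 1 := ⟨k - i - 1, by omega⟩
  have hchoose :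
      ((i + d + 1).choose i : ℚ) * (i + d + 1 + 1) = (i + d + 1 + 1).choose i * (d + 2) := by
    exact_mod_cast Nat.choose_mul_succ_eq (i + d + 1) i |>.trans (by congr 1; omega)
  rw [show i + d + 1 + 1 - i = d + 2 by omega, show i + d + 1 - 1 - i = d by omega, div_pow,
    pow_add, pow_add, pow_add]
  push_cast
  field_simp
  linear_combination -(bernoulli i * n ^ 2 * n ^ d * 2 ^ (d + 2)) * hchoose

theorem T_eq_add_sq_mul_remainder {k : ℕ} (hk : Even k) (hk0 : 0 < k) (m : ℕ) :
    (T k m : ℚ) = 2 ^ (k - 1) * (2 * m + 1 : ℕ) * bernoulli k +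
      ((2 * m + 1 : ℕ) : ℚ) ^ 2 * oddPowerSumRemainder k (2 * m + 1) := by
  have h := T_eq_bernoulli_eval hk m
  rw [Polynomial.bernoulli_eval_eq_sum, sum_range_succ, sum_range_succ,
    bernoulli_eq_zero_of_odd hk.add_one (by omega), mul_add, mul_add, mul_sum] at h
  rw [sum_congr rfl fun i hi ↦ two_pow_mul_choose_mul_half_pow (mem_range.mp hi) _] at h
  rw [← mul_sum, ← mul_sum, Nat.choose_succ_self_right, add_tsub_cancel_left, pow_one] at h
  have h2 : (2 : ℚ) ^ k = 2 * 2 ^ (k - 1) := by rw [← pow_succ']; congr 1; omega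
  apply mul_left_cancel₀ (by positivity : (k + 1 : ℚ) ≠ 0)
  rw [h, oddPowerSumRemainder, h2]
  push_cast
  ring

section PIntegral

variable {p : ℕ} [Fact p.Prime]

theorem mem_integer_padicValuation_iff {x : ℚ} : x ∈ ℤ₍p₎ ↔ ¬ p ∣ x.den :=
  Rat.padicValuation_le_one_iff

theorem inv_natCast_mem_integer_padicValuation {t : ℕ} (ht : ¬ p ∣ t) : (t : ℚ)⁻¹ ∈ ℤ₍p₎ := by
  rw [Valuation.mem_integer_iff, map_inv₀, ← Int.cast_natCast, Rat.padicValuation_cast,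
    Int.padicValuation_eq_one_iff.mpr (by exact_mod_cast ht), inv_one]

theorem inv_two_mem_integer_padicValuation (hp : p ≠ 2) : (2 : ℚ)⁻¹ ∈ ℤ₍p₎ := by
  have := inv_natCast_mem_integer_padicValuation (p := p) (t := 2)
    fun h ↦ hp ((Nat.prime_dvd_prime_iff_eq Fact.out Nat.prime_two).mp h)
  exact_mod_cast this

theorem natCast_div_mem_integer_padicValuation {w t : ℕ} (ht : t ≠ 0)
    (h : p ^ t.factorization p ∣ w) : (w / t : ℚ) ∈ ℤ₍p₎ := by
  have hp : p.Prime := Fact.out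
  obtain ⟨w', rfl⟩ := h
  have hpow : (p : ℚ) ^ t.factorization p ≠ 0 := pow_ne_zero _ (by exact_mod_cast hp.ne_zero)
  have hcancel :
      (↑(p ^ t.factorization p * w') / t : ℚ) = w' * (↑(t / p ^ t.factorization p))⁻¹ := by
    nth_rw 2 [← Nat.ordProj_mul_ordCompl_eq_self t p]
    push_cast
    rw [mul_div_mul_left _ _ hpow, div_eq_mul_inv]
  rw [hcancel]
  exact mul_mem (natCast_mem _ w')
    (inv_natCast_mem_integer_padicValuation (Nat.not_dvd_ordCompl hp ht))

theorem pow_div_mem_integer_padicValuation {n t c : ℕ} (hpn : p ∣ n) (ht : t ≠ 0)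
    (h : t.factorization p ≤ c) : (n ^ c / t : ℚ) ∈ ℤ₍p₎ := by
  have := natCast_div_mem_integer_padicValuation (p := p) (w := n ^ c) ht
    ((pow_dvd_pow p h).trans (pow_dvd_pow_of_dvd hpn c))
  simpa using this

theorem bernoulli_add_inv_mem_integer_padicValuation {j : ℕ} (hj : 0 < j) :
    bernoulli (2 * j) + (if p - 1 ∣ 2 * j then (p : ℚ)⁻¹ else 0) ∈ ℤ₍p₎ := by
  have hp : p.Prime := Fact.out
  obtain ⟨z, hz⟩ := Bernoulli.vonStaudt_clausen j
  set S := (range (2 * j + 2)).filter fun q ↦ q.Prime ∧ q - 1 ∣ 2 * j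
  have hsplit : ∑ q ∈ S, (1 : ℚ) / q =
      (if p - 1 ∣ 2 * j then (p : ℚ)⁻¹ else 0) + ∑ q ∈ S.erase p, (1 : ℚ) / q := by
    split_ifs with hdvd
    · have hpS : p ∈ S := mem_filter.mpr
        ⟨mem_range.mpr (by have := Nat.le_of_dvd (by omega) hdvd; omega), hp, hdvd⟩
      rw [← add_sum_erase _ _ hpS, one_div]
    · rw [erase_eq_of_notMem fun h ↦ hdvd (mem_filter.mp h).2.2, zero_add]
  have hrest : ∑ q ∈ S.erase p, (1 : ℚ) / q ∈ ℤ₍p₎ := by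
    refine sum_mem fun q hq ↦ ?_
    obtain ⟨hqp, -, hq, -⟩ := by simpa [S] using hq
    rw [one_div]
    exact inv_natCast_mem_integer_padicValuation fun h ↦
      hqp ((Nat.prime_dvd_prime_iff_eq hp hq).mp h).symm
  have : bernoulli (2 * j) + (if p - 1 ∣ 2 * j then (p : ℚ)⁻¹ else 0) =
      z - ∑ q ∈ S.erase p, (1 : ℚ) / q := by
    rw [hz, hsplit]; ring
  rw [this]
  exact sub_mem (intCast_mem _ z) hrest

theorem mul_bernoulli_two_mul_mem_integer_padicValuation (j : ℕ) :
    (p : ℚ) * bernoulli (2 * j) ∈ ℤ₍p₎ := by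
  rcases j.eq_zero_or_pos with rfl | hj
  · simp
  have hp : (p : ℚ) ≠ 0 := by exact_mod_cast (Fact.out : p.Prime).ne_zero
  have := mul_mem (natCast_mem _ p) (bernoulli_add_inv_mem_integer_padicValuation (p := p) hj)
  split_ifs at this
  · simpa [mul_add, hp] using sub_mem this (one_mem _)
  · simpa using this

theorem dvd_den_bernoulli_of_sub_one_dvd {j : ℕ} (hj : 0 < j) (h : p - 1 ∣ 2 * j) :
    p ∣ (bernoulli (2 * j)).den := by
  have hp : p.Prime := Fact.out
  by_contra hnd
  have hsum := bernoulli_add_inv_mem_integer_padicValuation (p := p) hj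
  rw [if_pos h] at hsum
  have hinv := sub_mem hsum (mem_integer_padicValuation_iff.mpr hnd)
  rw [add_sub_cancel_left, mem_integer_padicValuation_iff,
    Rat.inv_natCast_den_of_pos hp.pos] at hinv
  exact hinv dvd_rfl

theorem five_le_of_not_dvd_den_bernoulli {k : ℕ} (hk : Even k) (hk0 : 0 < k) (hp2 : p ≠ 2)
    (hpD : ¬ p ∣ (bernoulli k).den) : 5 ≤ p := by
  have hp : p.Prime := Fact.out
  by_contra hlt
  obtain rfl : p = 3 := by
    have := hp.two_le
    interval_cases p <;> first | rfl | omega | norm_num at hp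
  obtain ⟨r, rfl⟩ := hk
  have h3 := dvd_den_bernoulli_of_sub_one_dvd (p := 3) (j := r) (by omega) (by simp)
  rw [two_mul] at h3
  exact hpD h3

theorem den_mul_bernoulli_two_mul_mul_pow_div_mem {k j n : ℕ} (hk : Even k) (hj : 2 * j < k)
    (hp2 : p ≠ 2) (hpn : p ∣ n) :
    ((bernoulli k).den : ℚ) * bernoulli (2 * j) * (n ^ (k - 1 - 2 * j) / (k + 1 - 2 * j : ℕ)) ∈
      ℤ₍p₎ := by
  have hp : p.Prime := Fact.out
  have hpB := mul_bernoulli_two_mul_mem_integer_padicValuation (p := p) j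
  by_cases hpD : p ∣ (bernoulli k).den
  · obtain ⟨D, hD⟩ := hpD
    rw [hD, Nat.cast_mul, mul_comm (p : ℚ), mul_assoc (D : ℚ)]
    refine mul_mem (mul_mem (natCast_mem _ D) hpB) (pow_div_mem_integer_padicValuation hpn
      (by omega) ?_)
    have := Nat.factorization_le_sub_two (p := p) (t := k + 1 - 2 * j)
      (by have := hp.two_le; omega) (by omega)
    omega
  -- The extra factor `1 / p` is absorbed by `n ^ (t - 2) / t` with `t = k + 1 - 2 j` odd,
  -- except when `p = t = 3`; but `3` divides the denominator of `B_k`.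
  have hp5 := five_le_of_not_dvd_den_bernoulli hk (by omega) hp2 hpD
  have hpt : (n ^ (k - 1 - 2 * j) / (p * (k + 1 - 2 * j) : ℕ) : ℚ) ∈ ℤ₍p₎ := by
    refine pow_div_mem_integer_padicValuation hpn (Nat.mul_ne_zero hp.ne_zero (by omega)) ?_
    rw [Nat.factorization_mul hp.ne_zero (by omega), Finsupp.add_apply, hp.factorization_self]
    have := Nat.factorization_add_one_le_sub_two (t := k + 1 - 2 * j) hp5
      (by obtain ⟨r, rfl⟩ := hk; omega)
    omega
  have heq : ((bernoulli k).den : ℚ) * bernoulli (2 * j) *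
      (n ^ (k - 1 - 2 * j) / (k + 1 - 2 * j : ℕ)) = (bernoulli k).den *
        ((p : ℚ) * bernoulli (2 * j)) * (n ^ (k - 1 - 2 * j) / (p * (k + 1 - 2 * j) : ℕ)) := by
    push_cast
    field_simp
  rw [heq]
  exact mul_mem (mul_mem (natCast_mem _ _) hpB) hpt

theorem den_mul_bernoulli_mul_pow_div_mem {k i n : ℕ} (hk : Even k) (hi : i < k) (hp2 : p ≠ 2)
    (hpn : p ∣ n) :
    ((bernoulli k).den : ℚ) * bernoulli i * (n ^ (k - 1 - i) / (k + 1 - i : ℕ)) ∈ ℤ₍p₎ := by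
  rcases Nat.even_or_odd i with ⟨j, rfl⟩ | hodd
  · rw [← two_mul] at hi ⊢
    exact den_mul_bernoulli_two_mul_mul_pow_div_mem hk hi hp2 hpn
  obtain rfl | hi1 := eq_or_ne i 1
  · have hp3 : 3 ≤ p := by have := (Fact.out : p.Prime).two_le; omega
    refine mul_mem (mul_mem (natCast_mem _ _) ?_) (pow_div_mem_integer_padicValuation hpn
      (by omega) ?_)
    · rw [bernoulli_one, neg_div, one_div]
      exact neg_mem (inv_two_mem_integer_padicValuation hp2)
    · have := Nat.factorization_le_sub_two (t := k + 1 - 1) hp3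
        (by obtain ⟨r, rfl⟩ := hk; omega)
      omega
  · rw [bernoulli_eq_zero_of_odd hodd (by obtain ⟨r, hr⟩ := hodd; omega)]
    simp

theorem den_mul_oddPowerSumRemainder_mem {k n : ℕ} (hk : Even k) (hp2 : p ≠ 2) (hpn : p ∣ n) :
    ((bernoulli k).den : ℚ) * oddPowerSumRemainder k n ∈ ℤ₍p₎ := by
  rw [oddPowerSumRemainder, mul_sum]
  refine sum_mem fun i hi ↦ ?_
  have heq : ((bernoulli k).den : ℚ) * (bernoulli i * k.choose i * 2 ^ i * n ^ (k - 1 - i) /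
      (2 * (k + 1 - i : ℕ))) = ((bernoulli k).den * bernoulli i * (n ^ (k - 1 - i) /
        (k + 1 - i : ℕ))) * ((k.choose i * 2 ^ i : ℕ) : ℚ) * (2 : ℚ)⁻¹ := by
    push_cast
    ring
  rw [heq]
  exact mul_mem (mul_mem (den_mul_bernoulli_mul_pow_div_mem hk (mem_range.mp hi) hp2 hpn)
    (natCast_mem _ _)) (inv_two_mem_integer_padicValuation hp2)

end PIntegral

theorem Int.dvd_of_forall_div_mem_integer_padicValuation {a : ℤ} {N : ℕ} (hN : N ≠ 0)
    (h : ∀ (p : ℕ) [Fact p.Prime], p ∣ N → (a / N : ℚ) ∈ ℤ₍p₎) : (N : ℤ) ∣ a := by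
  rw [← Rat.den_div_intCast_eq_one_iff a N (by exact_mod_cast hN)]
  by_contra hden
  obtain ⟨p, hp, hpd⟩ := Nat.exists_prime_and_dvd hden
  have : Fact p.Prime := ⟨hp⟩
  have hdN : ((a / (N : ℤ) : ℚ)).den ∣ N := by
    have := Rat.den_dvd a N
    rw [Rat.divInt_eq_div] at this
    exact_mod_cast this
  exact mem_integer_padicValuation_iff.mp (by exact_mod_cast h p (hpd.trans hdN)) hpd

theorem Int.sq_dvd_iff_dvd_of_sq_dvd_sub {n c d t u : ℤ} (hn : n ≠ 0) (hc : IsCoprime n c)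
    (hud : IsCoprime u d) (h : n ^ 2 ∣ d * t - c * n * u) : n ^ 2 ∣ t ↔ n ∣ u := by
  constructor
  · intro ht
    have hcnu : n * n ∣ n * (c * u) := by
      have := (ht.mul_left d).sub h
      rwa [sub_sub_cancel, sq, show c * n * u = n * (c * u) by ring] at this
    exact hc.dvd_of_dvd_mul_left ((mul_dvd_mul_iff_left hn).mp hcnu)
  · rintro ⟨v, rfl⟩
    have hnd : IsCoprime n d := hud.of_isCoprime_of_dvd_left (dvd_mul_right n v)
    refine hnd.pow_left.dvd_of_dvd_mul_left ?_
    have := h.add (Dvd.intro (c * v) (by ring) : n ^ 2 ∣ c * n * (n * v))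
    simpa using this

theorem sq_dvd_den_mul_T_sub {k : ℕ} (hk : Even k) (hk0 : 0 < k) (m : ℕ) :
    ((2 * m + 1 : ℕ) : ℤ) ^ 2 ∣
      (bernoulli k).den * T k m - 2 ^ (k - 1) * (2 * m + 1 : ℕ) * (bernoulli k).num := by
  rw [← Nat.cast_pow]
  refine Int.dvd_of_forall_div_mem_integer_padicValuation (by positivity) fun p _ hpn ↦ ?_
  have hpn : p ∣ 2 * m + 1 := (Fact.out : p.Prime).dvd_of_dvd_pow hpn
  have hp2 : p ≠ 2 := by
    rintro rfl
    omega
  convert den_mul_oddPowerSumRemainder_mem hk hp2 hpn using 1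
  push_cast
  rw [← Rat.mul_den_eq_num, T_eq_add_sq_mul_remainder hk hk0]
  push_cast
  field_simp
  ring

theorem stmt_10_general (k m : ℕ) (hk : 0 < k) (heven : Even k) :
    (2 * m + 1) ^ 2 ∣ T k m ↔ ((2 * m + 1 : ℕ) : ℤ) ∣ (bernoulli k).num := by
  have hodd : IsCoprime ((2 * m + 1 : ℕ) : ℤ) 2 := ⟨1, -m, by push_cast; ring⟩
  rw [← Int.natCast_dvd_natCast, Nat.cast_pow]
  exact Int.sq_dvd_iff_dvd_of_sq_dvd_sub (by positivity) hodd.pow_right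
    (Rat.isCoprime_num_den _) (sq_dvd_den_mul_T_sub heven hk m)

theorem stmt_10 (k m : ℕ) (hk : 0 < k) (hm : 0 < m) (heven : Even k) :
    (2 * m + 1) ^ 2 ∣ T k m ↔ ((2 * m + 1 : ℕ) : ℤ) ∣ (bernoulli k).num :=
  stmt_10_general k m hk heven
end

section
/- Let a be a positive integer and let (t,q) be a potentially helpful pair for a. Then (t,q) is a helpful pair of the first kind for a if and only if (t,q) is a helpful pair of the second kind for a. -/
/-- `(r, p)` is an irregular pair if `p` is an odd prime, `r` is even with
`2 ≤ r ≤ p - 3`, and `p` divides the numerator of the Bernoulli number `B r`. -/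
def IsIrregularPair (r p : ℕ) : Prop :=
  p.Prime ∧ Odd p ∧ Even r ∧ 2 ≤ r ∧ r ≤ p - 3 ∧ (p : ℤ) ∣ (bernoulli r).num

/-- `(t, q)` is a potentially helpful pair for `a` if `q > 3` is a prime,
`t` is even with `2 ≤ t ≤ q - 3`, `q` does not divide `a`, and `(t, q)` is not
an irregular pair. -/
def PotentiallyHelpfulPair (a t q : ℕ) : Prop :=
  q.Prime ∧ 3 < q ∧ Even t ∧ 2 ≤ t ∧ t ≤ q - 3 ∧ ¬ q ∣ a ∧ ¬ IsIrregularPair t q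

/-- A potentially helpful pair `(t, q)` is a helpful pair of the first kind for `a`
if `a·S_t(x) ≡ x^t (mod q)` implies `x ≡ 0 (mod q)` for every positive integer `x`. -/
def HelpfulPairFirstKind (a t q : ℕ) : Prop :=
  ∀ x : ℕ, 0 < x → a * S t x ≡ x ^ t [MOD q] → x ≡ 0 [MOD q]

/-- A potentially helpful pair `(t, q)` is a helpful pair of the second kind for `a`
if `a·T_t(x) ≡ (2x+1)^t (mod q)` implies `2x+1 ≡ 0 (mod q)` for every positive
integer `x`. -/
def HelpfulPairSecondKind (a t q : ℕ) : Prop :=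
  ∀ x : ℕ, 0 < x → a * T t x ≡ (2 * x + 1) ^ t [MOD q] → 2 * x + 1 ≡ 0 [MOD q]

/-! Since `t < q - 1`, the `t`-th powers sum to zero over a full residue system modulo `q`, so
`S_t(x) mod q` depends only on `x mod q`: it is `P(x)` for a function
`P = zmodPowerSum t q` on `ZMod q`.
As `2j + 1 ≡ 2(c + j)` with `2c ≡ 1`, we get `T_t(x) ≡ 2^t (P(c + x) - P(c))`, and `P(c) = 0`
because, `t` being even, `j` and `q - j` contribute equally, so the full sum is `2 P(c)`.
Both kinds of helpfulness thus say that `a P(v) = v^t` has no solution `v ≠ 0` in `ZMod q`. -/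

open Finset

lemma sum_range_natCast_eq_sum_zmod {n : ℕ} [NeZero n] {M : Type*} [AddCommMonoid M]
    (g : ZMod n → M) : ∑ j ∈ range n, g j = ∑ z, g z :=
  sum_nbij' (fun j => (j : ZMod n)) ZMod.val (by simp) (by simp [ZMod.val_lt])
    (fun j hj => by simp [ZMod.val_cast_of_lt (mem_range.mp hj)])
    (fun z _ => ZMod.natCast_zmod_val z) (fun _ _ => rfl)

lemma periodic_sum_range_natCast {n : ℕ} [NeZero n] {M : Type*} [AddCommMonoid M]
    {g : ZMod n → M} (hg : ∑ z, g z = 0) :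
    Function.Periodic (fun x => ∑ j ∈ range x, g j) n := by
  intro x
  simp only [sum_range_add, Nat.cast_add]
  rw [sum_range_natCast_eq_sum_zmod (fun z => g ((x : ZMod n) + z)),
    Fintype.sum_equiv (Equiv.addLeft (x : ZMod n)) (fun z => g (x + z)) g fun _ => rfl, hg,
    add_zero]

lemma natCast_S {R : Type*} [Semiring R] {t : ℕ} (ht : t ≠ 0) (x : ℕ) :
    ((S t x : ℕ) : R) = ∑ j ∈ range x, (j : R) ^ t := by
  rcases Nat.eq_zero_or_pos x with rfl | hx
  · simp [S]
  · rw [sum_range_eq_add_Ico _ hx, S]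
    simp [zero_pow ht]

lemma natCast_T {R : Type*} [CommRing R] {c : R} (hc : 2 * c = 1) (t x : ℕ) :
    ((T t x : ℕ) : R) = 2 ^ t * ∑ j ∈ range x, (c + j) ^ t := by
  have hodd : ∀ j : ℕ, ((2 * j + 1 : ℕ) : R) = 2 * (c + j) := fun j => by
    push_cast
    linear_combination -hc
  simp only [T, Nat.cast_sum, Nat.cast_pow, hodd, mul_pow, mul_sum]

lemma sum_range_pow_eq_two_mul_half {R : Type*} [CommRing R] {m t : ℕ} (ht : Even t)
    (ht0 : t ≠ 0) (h : ((2 * m + 1 : ℕ) : R) = 0) :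
    ∑ j ∈ range (2 * m + 1), (j : R) ^ t = 2 * ∑ j ∈ range (m + 1), (j : R) ^ t := by
  rw [show 2 * m + 1 = (m + 1) + m by ring, sum_range_add, two_mul]
  congr 1
  rw [← sum_range_reflect, sum_range_succ', Nat.cast_zero, zero_pow ht0, add_zero]
  refine sum_congr rfl fun j hj => ?_
  have hj := mem_range.mp hj
  have : ((m + 1 + (m - 1 - j) : ℕ) : R) = -((j + 1 : ℕ) : R) := by
    rw [eq_neg_iff_add_eq_zero, ← Nat.cast_add, ← h]
    congr 1
    omega
  rw [this, ht.neg_pow]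

lemma forall_pos_natCast_add_iff {n : ℕ} [NeZero n] (c : ZMod n) {P : ZMod n → Prop} :
    (∀ x : ℕ, 0 < x → P (c + x)) ↔ ∀ v, P v := by
  refine ⟨fun h v => ?_, fun h x _ => h _⟩
  simpa using h ((v - c).val + n) (by have := NeZero.pos n; omega)

section PowerSum

variable (t q : ℕ)

def zmodPowerSum (v : ZMod q) : ZMod q := ∑ j ∈ range v.val, (j : ZMod q) ^ t

variable {t q} [Fact q.Prime]

lemma sum_zmod_pow_eq_zero (htq : t < q - 1) : ∑ z : ZMod q, z ^ t = 0 :=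
  FiniteField.sum_pow_lt_card_sub_one (ZMod q) t (by rwa [ZMod.card])

lemma zmodPowerSum_natCast (htq : t < q - 1) (x : ℕ) :
    zmodPowerSum t q x = ∑ j ∈ range x, (j : ZMod q) ^ t := by
  rw [zmodPowerSum, ZMod.val_natCast]
  exact (periodic_sum_range_natCast (sum_zmod_pow_eq_zero htq)).map_mod_nat x

lemma two_mul_natCast_half_succ (hq2 : q ≠ 2) : 2 * (((q + 1) / 2 : ℕ) : ZMod q) = 1 := by
  have h := Nat.two_mul_div_two_of_even ((Fact.out : q.Prime).odd_of_ne_two hq2).add_one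
  rw [← Nat.cast_ofNat, ← Nat.cast_mul, h, Nat.cast_add_one, ZMod.natCast_self, zero_add]

lemma sum_range_half_pow_eq_zero (hq2 : q ≠ 2) (ht : Even t) (ht0 : t ≠ 0) (htq : t < q - 1) :
    ∑ j ∈ range ((q + 1) / 2), (j : ZMod q) ^ t = 0 := by
  obtain ⟨m, rfl⟩ := (Fact.out : q.Prime).odd_of_ne_two hq2
  have h2 : (2 : ZMod (2 * m + 1)) ≠ 0 :=
    Ring.two_ne_zero (by rw [ZMod.ringChar_zmod_n]; omega)
  have hfull := sum_zmod_pow_eq_zero htq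
  rw [← sum_range_natCast_eq_sum_zmod (fun z => z ^ t),
    sum_range_pow_eq_two_mul_half ht ht0 (ZMod.natCast_self _)] at hfull
  rw [show (2 * m + 1 + 1) / 2 = m + 1 by omega]
  exact (mul_eq_zero.mp hfull).resolve_left h2

lemma natCast_T_eq_zmodPowerSum (hq2 : q ≠ 2) (ht : Even t) (ht0 : t ≠ 0) (htq : t < q - 1) (x : ℕ) :
    ((T t x : ℕ) : ZMod q) = 2 ^ t * zmodPowerSum t q (((q + 1) / 2 : ℕ) + x) := by
  rw [natCast_T (two_mul_natCast_half_succ hq2), ← Nat.cast_add, zmodPowerSum_natCast htq,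
    sum_range_add, sum_range_half_pow_eq_zero hq2 ht ht0 htq, zero_add]
  push_cast
  rfl

lemma helpfulPairFirstKind_iff (ht0 : t ≠ 0) (htq : t < q - 1) (a : ℕ) :
    HelpfulPairFirstKind a t q ↔ ∀ v : ZMod q, a * zmodPowerSum t q v = v ^ t → v = 0 := by
  have key : ∀ x : ℕ, (a * S t x ≡ x ^ t [MOD q] → x ≡ 0 [MOD q]) ↔
      ((a : ZMod q) * zmodPowerSum t q x = (x : ZMod q) ^ t → (x : ZMod q) = 0) := fun x => by
    simp only [← ZMod.natCast_eq_natCast_iff, Nat.cast_mul, Nat.cast_pow, Nat.cast_zero,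
      natCast_S ht0, zmodPowerSum_natCast htq]
  simp only [HelpfulPairFirstKind, key]
  rw [← forall_pos_natCast_add_iff 0]
  simp only [zero_add]

lemma helpfulPairSecondKind_iff (hq2 : q ≠ 2) (ht : Even t) (ht0 : t ≠ 0) (htq : t < q - 1)
    (a : ℕ) :
    HelpfulPairSecondKind a t q ↔ ∀ v : ZMod q, a * zmodPowerSum t q v = v ^ t → v = 0 := by
  set c : ZMod q := (((q + 1) / 2 : ℕ) : ZMod q) with hc
  have h2 : (2 : ZMod q) ≠ 0 := left_ne_zero_of_mul_eq_one (two_mul_natCast_half_succ hq2)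
  have hodd : ∀ x : ℕ, ((2 * x + 1 : ℕ) : ZMod q) = 2 * (c + x) := fun x => by
    push_cast
    linear_combination -two_mul_natCast_half_succ hq2
  have key : ∀ x : ℕ, (a * T t x ≡ (2 * x + 1) ^ t [MOD q] → 2 * x + 1 ≡ 0 [MOD q]) ↔
      ((a : ZMod q) * zmodPowerSum t q (c + x) = (c + x) ^ t → c + x = 0) := fun x => by
    rw [← ZMod.natCast_eq_natCast_iff, ← ZMod.natCast_eq_natCast_iff, Nat.cast_mul,
      natCast_T_eq_zmodPowerSum hq2 ht ht0 htq, ← hc, Nat.cast_pow, hodd, Nat.cast_zero, mul_pow,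
      mul_left_comm, mul_right_inj' (pow_ne_zero t h2), mul_eq_zero, or_iff_right h2]
  simp only [HelpfulPairSecondKind, key]
  rw [← forall_pos_natCast_add_iff c]

end PowerSum

theorem stmt_17_general (a t q : ℕ) (hpot : PotentiallyHelpfulPair a t q) :
    HelpfulPairFirstKind a t q ↔ HelpfulPairSecondKind a t q := by
  obtain ⟨hq, hq3, ht, ht2, htq, -, -⟩ := hpot
  have : Fact q.Prime := ⟨hq⟩
  rw [helpfulPairFirstKind_iff (by omega) (by omega),
    helpfulPairSecondKind_iff (by omega) ht (by omega) (by omega)]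

theorem stmt_17 (a t q : ℕ) (ha : 0 < a) (hpot : PotentiallyHelpfulPair a t q) :
    HelpfulPairFirstKind a t q ↔ HelpfulPairSecondKind a t q :=
  stmt_17_general a t q hpot
end

section
/- Suppose a, k, m are positive integers with a·T_k(m) = (2m+1)^k and m > 1. If a ≡ 1 (mod 4), then ord_2(am − 1) = 2 + ord_2(k); and if a ≡ 3 (mod 4), then ord_2(am − 1) ≥ 3 + ord_2(k). -/
open Finset

theorem Int.ModEq.sq_two_mul {a b n : ℤ} (h : a ≡ b [ZMOD n]) (hn : 2 ∣ n) :
    a ^ 2 ≡ b ^ 2 [ZMOD 2 * n] := by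
  rw [Int.modEq_iff_dvd] at h ⊢
  have hsum : 2 ∣ b + a := by
    rw [show b + a = (b - a) + 2 * a by ring]
    exact dvd_add (hn.trans h) (dvd_mul_right 2 a)
  rw [sq_sub_sq]
  exact mul_dvd_mul hsum h

theorem Int.pow_two_pow_modEq {y t : ℤ} (hy : y ≡ 1 + 8 * t [ZMOD 16]) (w : ℕ) :
    y ^ 2 ^ w ≡ 1 + 2 ^ (w + 3) * t [ZMOD 2 ^ (w + 4)] := by
  induction w with
  | zero => simpa using hy
  | succ w ih =>
    rw [show (2 : ℤ) ^ (w + 1 + 4) = 2 * 2 ^ (w + 4) by ring]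
    calc y ^ 2 ^ (w + 1) = (y ^ 2 ^ w) ^ 2 := by rw [pow_succ, pow_mul]
      _ ≡ (1 + 2 ^ (w + 3) * t) ^ 2 [ZMOD 2 * 2 ^ (w + 4)] :=
        ih.sq_two_mul (dvd_pow_self 2 (by omega))
      _ = 1 + 2 ^ (w + 1 + 3) * t + 2 * 2 ^ (w + 4) * (2 ^ (w + 1) * t ^ 2) := by ring
      _ ≡ 1 + 2 ^ (w + 1 + 3) * t [ZMOD 2 * 2 ^ (w + 4)] := Int.modEq_add_fac_self

theorem Int.odd_pow_modEq {x : ℤ} (hx : Odd x) {u : ℕ} (hu : Odd u) (w : ℕ) :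
    x ^ (2 ^ (w + 1) * u) ≡ 1 + 2 ^ w * (x ^ 2 - 1) [ZMOD 2 ^ (w + 4)] := by
  obtain ⟨t, ht⟩ : ∃ t, x ^ 2 = 1 + 8 * t := by
    obtain ⟨j, rfl⟩ := hx
    obtain ⟨r, hr⟩ := Int.even_mul_succ_self j
    exact ⟨r, by linear_combination 4 * hr⟩
  have h4 : x ^ 4 ≡ 1 [ZMOD 16] :=
    Int.modEq_iff_dvd.mpr ⟨-(t + 4 * t ^ 2), by rw [show x ^ 4 = (x ^ 2) ^ 2 by ring, ht]; ring⟩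
  have h16 : x ^ (2 * u) ≡ 1 + 8 * t [ZMOD 16] := by
    obtain ⟨s, rfl⟩ := hu
    calc x ^ (2 * (2 * s + 1)) = (x ^ 4) ^ s * x ^ 2 := by ring
      _ ≡ 1 ^ s * x ^ 2 [ZMOD 16] := (h4.pow s).mul_right _
      _ = 1 + 8 * t := by rw [one_pow, one_mul, ht]
  calc x ^ (2 ^ (w + 1) * u) = (x ^ (2 * u)) ^ 2 ^ w := by ring
    _ ≡ 1 + 2 ^ (w + 3) * t [ZMOD 2 ^ (w + 4)] := Int.pow_two_pow_modEq h16 w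
    _ = 1 + 2 ^ w * (x ^ 2 - 1) := by rw [ht]; ring

theorem sixteen_dvd_sum_odd_sq_sub_one {m : ℕ} (hm : Odd m) :
    (16 : ℤ) ∣ ∑ j ∈ range m, ((2 * j + 1 : ℤ) ^ 2 - 1) := by
  obtain ⟨r, rfl⟩ := hm
  induction r with
  | zero => simp
  | succ r ih =>
    rw [show 2 * (r + 1) + 1 = 2 * r + 1 + 1 + 1 by ring, sum_range_succ, sum_range_succ,
      add_assoc]
    exact dvd_add ih ⟨2 * (r + 1) ^ 2, by push_cast; ring⟩

theorem T_modEq {m u : ℕ} (hm : Odd m) (hu : Odd u) (w : ℕ) :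
    (T (2 ^ (w + 1) * u) m : ℤ) ≡ m [ZMOD 2 ^ (w + 4)] := by
  have hdvd : (2 : ℤ) ^ (w + 4) ∣ 2 ^ w * ∑ j ∈ range m, ((2 * j + 1 : ℤ) ^ 2 - 1) := by
    rw [pow_add]
    exact mul_dvd_mul_left _ (by simpa using sixteen_dvd_sum_odd_sq_sub_one hm)
  calc (T (2 ^ (w + 1) * u) m : ℤ)
      = ∑ j ∈ range m, (2 * j + 1 : ℤ) ^ (2 ^ (w + 1) * u) := by simp [T]
    _ ≡ ∑ j ∈ range m, (1 + 2 ^ w * ((2 * j + 1 : ℤ) ^ 2 - 1)) [ZMOD 2 ^ (w + 4)] :=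
      Int.ModEq.sum fun j _ => Int.odd_pow_modEq (odd_two_mul_add_one _) hu w
    _ = m + 2 ^ w * ∑ j ∈ range m, ((2 * j + 1 : ℤ) ^ 2 - 1) := by
      rw [sum_add_distrib, ← mul_sum]; simp
    _ ≡ m + 0 [ZMOD 2 ^ (w + 4)] := Int.ModEq.add_left _ (Int.modEq_zero_iff_dvd.mpr hdvd)
    _ = m := add_zero _

theorem odd_T_iff {k m : ℕ} : Odd (T k m) ↔ Odd m := by
  induction m with
  | zero => simp [T]
  | succ m ih =>
    rw [T, sum_range_succ, ← T]
    simp [Nat.odd_add, ih, parity_simps]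

theorem dvd_T_of_odd {k : ℕ} (hk : Odd k) (m : ℕ) : m ∣ T k m := by
  have h2 : 2 * m ∣ 2 * T k m := by
    have hpair : 2 * T k m = ∑ j ∈ range m, ((2 * j + 1) ^ k + (2 * (m - 1 - j) + 1) ^ k) := by
      rw [sum_add_distrib, sum_range_reflect (fun j => (2 * j + 1) ^ k) m, T, two_mul]
    rw [hpair]
    refine dvd_sum fun j hj => ?_
    have hj := mem_range.mp hj
    rw [show 2 * m = 2 * j + 1 + (2 * (m - 1 - j) + 1) by omega]
    exact hk.nat_add_dvd_pow_add_pow _ _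
  exact Nat.dvd_of_mul_dvd_mul_left two_pos h2

theorem even_of_mul_T_eq {a k m : ℕ} (hm : 1 < m) (h : a * T k m = (2 * m + 1) ^ k) :
    Even k := by
  by_contra hk
  have hdvd : m ∣ (2 * m + 1) ^ k :=
    h ▸ dvd_mul_of_dvd_right (dvd_T_of_odd (Nat.not_even_iff_odd.mp hk) m) a
  have hcop : Nat.Coprime m ((2 * m + 1) ^ k) :=
    ((Nat.coprime_mul_right_add_right m 1 2).mpr (Nat.coprime_one_right m)).pow_right k
  exact hm.ne' (hcop.eq_one_of_dvd hdvd)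

theorem padicValInt_eq_of_modEq_pow {p : ℕ} [hp : Fact p.Prime] {x : ℤ} {s : ℕ}
    (h : x ≡ p ^ s [ZMOD p ^ (s + 1)]) : padicValInt p x = s := by
  have hdvd : (p : ℤ) ^ s ∣ x :=
    ((h.of_dvd (pow_dvd_pow _ s.le_succ)).dvd_iff).mpr dvd_rfl
  have hndvd : ¬ (p : ℤ) ^ (s + 1) ∣ x := by
    rw [h.dvd_iff]
    exact_mod_cast (Nat.pow_dvd_pow_iff_le_right hp.out.one_lt).not.mpr (by omega)
  rw [padicValInt_dvd_iff] at hdvd hndvd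
  omega

theorem mul_sub_one_modEq {a m u : ℕ} (hm : Odd m) (hu : Odd u) (w : ℕ)
    (h : a * T (2 ^ (w + 1) * u) m = (2 * m + 1) ^ (2 ^ (w + 1) * u)) :
    (a * m - 1 : ℤ) ≡ 2 ^ (w + 2) * (m * (m + 1)) [ZMOD 2 ^ (w + 2) * 4] := by
  have hT : (a * m : ℤ) ≡ 1 + 2 ^ w * ((2 * m + 1) ^ 2 - 1) [ZMOD 2 ^ (w + 4)] :=
    calc (a * m : ℤ) ≡ a * T (2 ^ (w + 1) * u) m [ZMOD 2 ^ (w + 4)] :=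
          ((T_modEq hm hu w).mul_left _).symm
      _ = (2 * m + 1) ^ (2 ^ (w + 1) * u) := by exact_mod_cast h
      _ ≡ _ [ZMOD _] := Int.odd_pow_modEq (odd_two_mul_add_one _) hu w
  convert hT.sub_right 1 using 1 <;> ring

theorem Int.modEq_of_mul_modEq_one {a m : ℤ} (hm : Odd m) (h : a * m ≡ 1 [ZMOD 4]) :
    a ≡ m [ZMOD 4] :=
  have hm2 : m ^ 2 ≡ 1 [ZMOD 4] := Int.sq_mod_four_eq_one_of_odd hm
  calc a = a * 1 := (mul_one _).symm
    _ ≡ a * m ^ 2 [ZMOD 4] := hm2.symm.mul_left _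
    _ = (a * m) * m := by ring
    _ ≡ 1 * m [ZMOD 4] := h.mul_right _
    _ = m := one_mul _

theorem padicValInt_two_eq_of_modEq_one {x m : ℤ} {s : ℕ}
    (h : x ≡ 2 ^ s * (m * (m + 1)) [ZMOD 2 ^ s * 4]) (hm : m ≡ 1 [ZMOD 4]) :
    padicValInt 2 x = s + 1 := by
  refine padicValInt_eq_of_modEq_pow ?_
  convert h.trans ((hm.mul (hm.add_right 1)).mul_left' (c := 2 ^ s)) using 1 <;> push_cast <;> ring

theorem le_padicValInt_two_of_modEq_three {x m : ℤ} {s : ℕ} (hx : x ≠ 0)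
    (h : x ≡ 2 ^ s * (m * (m + 1)) [ZMOD 2 ^ s * 4]) (hm : m ≡ 3 [ZMOD 4]) :
    s + 2 ≤ padicValInt 2 x := by
  have h0 := (h.trans ((hm.mul (hm.add_right 1)).mul_left' (c := 2 ^ s))).trans
    (Int.modEq_zero_iff_dvd.mpr ⟨3, by ring⟩)
  have hdvd : ((2 : ℕ) : ℤ) ^ (s + 2) ∣ x := by
    convert Int.modEq_zero_iff_dvd.mp h0 using 1; push_cast; ring
  exact ((padicValInt_dvd_iff _ _).mp hdvd).resolve_left hx

theorem stmt_19_general (a k m : ℕ) (hk : 0 < k) (hm : 1 < m)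
    (h : a * T k m = (2 * m + 1) ^ k) :
    (a % 4 = 1 → padicValNat 2 (a * m - 1) = 2 + padicValNat 2 k) ∧
      (a % 4 = 3 → padicValNat 2 (a * m - 1) ≥ 3 + padicValNat 2 k) := by
  obtain ⟨ha, hm_odd⟩ : Odd a ∧ Odd m := by
    rw [← odd_T_iff (k := k) (m := m), ← Nat.odd_mul, h]
    exact (odd_two_mul_add_one m).pow
  obtain ⟨_ | w, u, hu, rfl⟩ := Nat.exists_eq_two_pow_mul_odd hk.ne'
  · exact absurd (even_of_mul_T_eq hm h) (by simpa using hu)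
  have hcong := mul_sub_one_modEq hm_odd hu w h
  have ham4 : (a * m : ℤ) ≡ 1 [ZMOD 4] := (Int.modEq_iff_dvd.mpr <|
    (hcong.of_dvd (dvd_mul_left 4 _)).dvd_iff.mpr (dvd_mul_of_dvd_left ⟨2 ^ w, by ring⟩ _)).symm
  have ha4 : (a : ℤ) ≡ m [ZMOD 4] := Int.modEq_of_mul_modEq_one (by exact_mod_cast hm_odd) ham4
  have ham : 1 < a * m := hm.trans_le (Nat.le_mul_of_pos_left m ha.pos)
  rw [padicValNat.mul (by positivity) hu.pos.ne', padicValNat.prime_pow,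
    padicValNat.eq_zero_of_not_dvd hu.not_two_dvd_nat, ← padicValInt.of_nat,
    Nat.cast_sub ham.le, Nat.cast_mul, Nat.cast_one]
  refine ⟨fun ha1 => ?_, fun ha3 => ?_⟩
  · rw [padicValInt_two_eq_of_modEq_one hcong (ha4.symm.trans (by unfold Int.ModEq; omega))]
    omega
  · have hx : (a * m - 1 : ℤ) ≠ 0 := by rw [← Nat.cast_mul]; omega
    have := le_padicValInt_two_of_modEq_three hx hcong (ha4.symm.trans (by unfold Int.ModEq; omega))
    omega

theorem stmt_19 (a k m : ℕ) (ha : 0 < a) (hk : 0 < k) (hm : 1 < m)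
    (h : a * T k m = (2 * m + 1) ^ k) :
    (a % 4 = 1 → padicValNat 2 (a * m - 1) = 2 + padicValNat 2 k) ∧
      (a % 4 = 3 → padicValNat 2 (a * m - 1) ≥ 3 + padicValNat 2 k) :=
  stmt_19_general a k m hk hm h
end
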